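/- Let μ : ℝ³ → ℝ be C¹, integrable, with integrable gradient, k ∈ ℝ³ \ {0} and ω ∈ ℂ³ with Im(ω·k) > 0 satisfying the Penrose relation. Set λ = −ik·ω (so Re λ > 0) and f(s,y,v) = e^{λs} e^{ik·y} f̂(v) with f̂(v) = (1/|k|²)(k·∇μ(v))/(k·(v−ω)). Then f solves the linearized Vlasov–Poisson equation ∂ₛf + v·∇_y f + ∇_v μ(v) · ∇_y Δ_y^{-1}(∫ f dv) = 0, where Δ_y^{-1} acts on the Fourier mode e^{ik·y} by multiplication by −1/|k|². -/

import Mathlib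

open MeasureTheory RealInnerProductSpace Complex

/-!
On the mode `e^{λs} e^{ik·y}` the transport operator `∂ₛ + v·∇_y` is multiplication by
`λ + ik·v = ik·(v − ω)`, which cancels the resonant denominator of `f̂`; the Penrose relation says
exactly that `∫ f̂ = 1`, so what remains is `i(k·∇μ)/|k|²` times the mode, and the field term cancels
it. The denominator never vanishes because `Im(k·(v − ω)) = −Im(k·ω) < 0`.
-/

theorem sum_ofReal_mul_sub_ne_zero_of_im_pos {ι : Type*} [Fintype ι] (k v : ι → ℝ) (ω : ι → ℂ)
    (hω : 0 < (∑ i, ω i * k i).im) : ∑ i, (k i : ℂ) * (v i - ω i) ≠ 0 := by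
  have him : (∑ i, (k i : ℂ) * (v i - ω i)).im = -(∑ i, ω i * k i).im := by
    simp [im_sum, mul_im, mul_comm]
  intro h
  rw [h, zero_im] at him
  linarith

theorem hasDerivAt_cexp_mul_ofReal (lam : ℂ) (s : ℝ) :
    HasDerivAt (fun s : ℝ => cexp (lam * s)) (cexp (lam * s) * lam) s := by
  simpa using ((hasDerivAt_id (s : ℂ)).const_mul lam).cexp.comp_ofReal

theorem hasFDerivAt_cexp_I_mul_inner {E : Type*} [NormedAddCommGroup E] [InnerProductSpace ℝ E]
    (k y : E) :
    HasFDerivAt (fun y : E => cexp (I * ⟪k, y⟫))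
      (cexp (I * ⟪k, y⟫) • I • (ofRealCLM ∘L innerSL ℝ k)) y :=
  ((ofRealCLM ∘L innerSL ℝ k).hasFDerivAt.const_mul I).cexp

theorem ofReal_inner_eq_sum {ι : Type*} [Fintype ι] (k v : EuclideanSpace ℝ ι) :
    ((⟪k, v⟫ : ℝ) : ℂ) = ∑ i, (k i : ℂ) * v i := by
  simp [PiLp.inner_apply, mul_comm]

theorem penrose_mode_solves_linearized_vlasov_poisson_general
    (μ : EuclideanSpace ℝ (Fin 3) → ℝ)
    (k : EuclideanSpace ℝ (Fin 3)) (hk : k ≠ 0)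
    (ω : Fin 3 → ℂ)
    (hω : 0 < (∑ i, ω i * (k i : ℂ)).im)
    (kdot : EuclideanSpace ℝ (Fin 3) → ℂ)
    (hkdot : ∀ v, kdot v = ∑ i, (k i : ℂ) * ((v i : ℂ) - ω i))
    (fhat : EuclideanSpace ℝ (Fin 3) → ℂ)
    (hf : ∀ v, fhat v = (1 / (‖k‖ : ℂ) ^ 2) * ((fderiv ℝ μ v k : ℂ) / kdot v))
    (hPen : (1 / (‖k‖ : ℂ) ^ 2) * ∫ v, ((fderiv ℝ μ v k : ℂ) / kdot v) = 1)
    (lam : ℂ) (hlam : lam = -Complex.I * ∑ i, (k i : ℂ) * ω i)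
    (F : ℝ → EuclideanSpace ℝ (Fin 3) → EuclideanSpace ℝ (Fin 3) → ℂ)
    (hF : ∀ s y v, F s y v
        = Complex.exp (lam * s) * Complex.exp (Complex.I * (⟪k, y⟫ : ℝ)) * fhat v) :
    ∀ s y v,
      deriv (fun s' => F s' y v) s
        + fderiv ℝ (fun y' => F s y' v) y v
        + (-Complex.I / (‖k‖ : ℂ) ^ 2) * (fderiv ℝ μ v k : ℂ)
            * (Complex.exp (lam * s) * Complex.exp (Complex.I * (⟪k, y⟫ : ℝ))
                * ∫ w, fhat w) = 0 := by
  intro s y v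
  have hk' : (‖k‖ : ℂ) ≠ 0 := by simpa using hk
  have hkdot_ne : kdot v ≠ 0 := hkdot v ▸ sum_ofReal_mul_sub_ne_zero_of_im_pos _ _ ω hω
  have hmass : ∫ w, fhat w = 1 := by simp_rw [hf, integral_const_mul]; exact hPen
  have hdispersion : lam + I * ⟪k, v⟫ = I * kdot v := by
    rw [hlam, hkdot, ofReal_inner_eq_sum]
    simp only [mul_sub, Finset.sum_sub_distrib, Finset.mul_sum, neg_mul, Finset.sum_neg_distrib]
    ring
  have hF' : F = fun (s : ℝ) y v => cexp (lam * s) * cexp (I * ⟪k, y⟫) * fhat v := by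
    funext s y v; exact hF s y v
  have htime : deriv (fun s' => F s' y v) s = F s y v * lam := by
    rw [hF', ((hasDerivAt_cexp_mul_ofReal lam s).mul_const _ |>.mul_const _).deriv]
    ring
  have hspace : fderiv ℝ (fun y' => F s y' v) y v = F s y v * (I * ⟪k, v⟫) := by
    rw [hF', ((hasFDerivAt_cexp_I_mul_inner k y).const_mul _ |>.mul_const _).fderiv]
    simp only [smul_apply,
      ContinuousLinearMap.comp_apply, ofRealCLM_apply, innerSL_apply_apply, smul_eq_mul]
    ring
  rw [htime, hspace, hmass, hF, hf]
  field_simp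
  linear_combination (fderiv ℝ μ v k : ℂ) * cexp (lam * s) * cexp (I * ⟪k, y⟫) * hdispersion

/-- The growing mode `f(s,y,v) = e^{λs} e^{ik·y} f̂(v)`, with `λ = −ik·ω` and
`f̂(v) = (1/|k|²)(k·∇μ(v))/(k·(v−ω))`, solves the linearized Vlasov–Poisson equation
`∂ₛf + v·∇_y f + ∇_vμ(v)·∇_yΔ_y^{-1}(∫ f dv) = 0`, where on the Fourier mode
`e^{ik·y}` the operator `∇_yΔ_y^{-1}∫·dv` acts as multiplication by `−ik/|k|²`
times the velocity average. -/
theorem penrose_mode_solves_linearized_vlasov_poisson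
    (μ : EuclideanSpace ℝ (Fin 3) → ℝ)
    (hC1 : ContDiff ℝ 1 μ)
    (hint : Integrable μ)
    (hgrad : Integrable (fun v => ‖fderiv ℝ μ v‖))
    (k : EuclideanSpace ℝ (Fin 3)) (hk : k ≠ 0)
    (ω : Fin 3 → ℂ)
    (hω : 0 < (∑ i, ω i * (k i : ℂ)).im)
    (kdot : EuclideanSpace ℝ (Fin 3) → ℂ)
    (hkdot : ∀ v, kdot v = ∑ i, (k i : ℂ) * ((v i : ℂ) - ω i))
    (fhat : EuclideanSpace ℝ (Fin 3) → ℂ)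
    (hf : ∀ v, fhat v = (1 / (‖k‖ : ℂ) ^ 2) * ((fderiv ℝ μ v k : ℂ) / kdot v))
    (hPen : (1 / (‖k‖ : ℂ) ^ 2) * ∫ v, ((fderiv ℝ μ v k : ℂ) / kdot v) = 1)
    (lam : ℂ) (hlam : lam = -Complex.I * ∑ i, (k i : ℂ) * ω i)
    (F : ℝ → EuclideanSpace ℝ (Fin 3) → EuclideanSpace ℝ (Fin 3) → ℂ)
    (hF : ∀ s y v, F s y v
        = Complex.exp (lam * s) * Complex.exp (Complex.I * (⟪k, y⟫ : ℝ)) * fhat v) :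
    ∀ s y v,
      deriv (fun s' => F s' y v) s
        + fderiv ℝ (fun y' => F s y' v) y v
        + (-Complex.I / (‖k‖ : ℂ) ^ 2) * (fderiv ℝ μ v k : ℂ)
            * (Complex.exp (lam * s) * Complex.exp (Complex.I * (⟪k, y⟫ : ℝ))
                * ∫ w, fhat w) = 0 :=
  penrose_mode_solves_linearized_vlasov_poisson_general μ k hk ω hω kdot hkdot fhat hf hPen lam hlam
    F hF
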